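/- arXiv:1007.1037 — 2 statements merged into one kernel-verified Lean document; each statement's English description precedes it below -/
import Mathlib

section
/- Let u be a unitary element of M = M_n(L) with entries u_{ij} ∈ L, and let ρ[U] be the n²×n² matrix associated to the operational partition U induced by u. Then N and uNu* are mutually orthogonal if and only if the von Neumann entropy S(ρ[U]) equals 2 log n, the logarithm of the dimension of N. -/
open Matrix ComplexOrder

/-- The normalized trace `τ_M = Tr/n ⊗ τ_L` on `M = M_n(L)`:
`τ_M(x) = (1/n) Σ_i τ_L(x_{ii})`. -/
noncomputable def tauM (n : ℕ) {L : Type*} [Ring L] [Algebra ℂ L]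
    (τ : L →ₗ[ℂ] ℂ) (x : Matrix (Fin n) (Fin n) L) : ℂ :=
  (n : ℂ)⁻¹ * ∑ i, τ (x i i)

/-- The embedding `a ↦ a ⊗ 1_L` of `M_n(ℂ)` into `M_n(L)`. -/
noncomputable def incl (n : ℕ) {L : Type*} [Ring L] [Algebra ℂ L]
    (a : Matrix (Fin n) (Fin n) ℂ) : Matrix (Fin n) (Fin n) L :=
  a.map (algebraMap ℂ L)

/-- `N = M_n(ℂ) ⊗ 1_L` and `uNu*` are mutually orthogonal:
`τ_M(ab) = τ_M(a)τ_M(b)` for all `a ∈ N`, `b ∈ uNu*`. -/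
def MutuallyOrthogonalConj (n : ℕ) {L : Type*} [Ring L] [StarRing L] [Algebra ℂ L]
    (τ : L →ₗ[ℂ] ℂ) (u : Matrix (Fin n) (Fin n) L) : Prop :=
  ∀ a b : Matrix (Fin n) (Fin n) ℂ,
    tauM n τ (incl n a * (u * incl n b * star u)) =
      tauM n τ (incl n a) * tauM n τ (u * incl n b * star u)

/-- The `n²×n²` density matrix `ρ[U]` associated to the operational partition
`U = (u_{ij}/√n)_{i,j}` induced by `u`:
its `((i,j),(k,l))` entry is `(1/n)·τ_L(u_{kl}* u_{ij})`. -/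
noncomputable def rhoU (n : ℕ) {L : Type*} [Ring L] [StarRing L] [Algebra ℂ L]
    (τ : L →ₗ[ℂ] ℂ) (u : Matrix (Fin n) (Fin n) L) :
    Matrix (Fin n × Fin n) (Fin n × Fin n) ℂ :=
  Matrix.of fun p q : Fin n × Fin n =>
    (n : ℂ)⁻¹ * τ (star (u q.1 q.2) * u p.1 p.2)

/-- The von Neumann entropy `S(ρ) = Σ_i η(λ_i)` of a Hermitian matrix `ρ`, where
`λ_i` are the eigenvalues of `ρ` (with multiplicity) and `η(t) = -t log t`. -/
noncomputable def vnEntropy {k : Type*} [Fintype k] [DecidableEq k]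
    (ρ : Matrix k k ℂ) (hρ : ρ.IsHermitian) : ℝ :=
  ∑ i, Real.negMulLog (hρ.eigenvalues i)

/-!
`ρ[U]` is `1/n` times the Gram matrix of the entries of `u` for the form `(x, y) ↦ τ(y* x)`, so it
is positive semidefinite, and `u* u = 1` gives it trace `1`. By Jensen's inequality for the strictly
concave `η`, its entropy is `log n² = 2 log n` exactly when its spectrum is uniform, i.e. when
`ρ[U] = n⁻² • 1`. On the other side, `τ_M(a · u b u*) = Tr((a ⊗ bᵀ) ρ[U])` while
`τ_M(a) τ_M(b) = Tr((a ⊗ bᵀ) (n⁻² • 1))`, and the elementary tensors `a ⊗ bᵀ` span all of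
`M_{n²}(ℂ)`, so mutual orthogonality is also equivalent to `ρ[U] = n⁻² • 1`.
-/

open scoped Kronecker

theorem Real.sum_negMulLog_eq_log_card_iff {ι : Type*} [Fintype ι] {p : ι → ℝ}
    (h0 : ∀ i, 0 ≤ p i) (h1 : ∑ i, p i = 1) :
    ∑ i, Real.negMulLog (p i) = Real.log (Fintype.card ι) ↔
      ∀ i, p i = (Fintype.card ι : ℝ)⁻¹ := by
  have hm : (0 : ℝ) < Fintype.card ι := by
    have : Nonempty ι := by
      by_contra h
      simp [not_nonempty_iff.mp h] at h1
    exact_mod_cast Fintype.card_pos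
  have hmean : ∑ i, (Fintype.card ι : ℝ)⁻¹ • p i = (Fintype.card ι : ℝ)⁻¹ := by
    rw [← Finset.smul_sum, h1, smul_eq_mul, mul_one]
  have jensen := Real.strictConcaveOn_negMulLog.map_sum_eq_iff (t := Finset.univ)
    (w := fun _ ↦ (Fintype.card ι : ℝ)⁻¹) (p := p) (fun _ _ ↦ inv_pos.mpr hm)
    (by simp [hm.ne']) (fun i _ ↦ h0 i)
  simp only [hmean, ← Finset.smul_sum, Finset.mem_univ, true_implies] at jensen
  have hmid : Real.negMulLog (Fintype.card ι : ℝ)⁻¹ =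
      (Fintype.card ι : ℝ)⁻¹ * Real.log (Fintype.card ι) := by
    rw [Real.negMulLog, Real.log_inv]; ring
  rw [← jensen, hmid, smul_eq_mul, mul_right_inj' (inv_ne_zero hm.ne'), eq_comm]

theorem Matrix.IsHermitian.eigenvalues_eq_const_iff {𝕜 n : Type*} [RCLike 𝕜] [Fintype n]
    [DecidableEq n] {A : Matrix n n 𝕜} (hA : A.IsHermitian)
    (c : ℝ) : (∀ i, hA.eigenvalues i = c) ↔ A = (c : 𝕜) • 1 := by
  rw [← RCLike.real_smul_eq_coe_smul, ← Algebra.algebraMap_eq_smul_one]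
  constructor
  · intro h
    refine CFC.eq_algebraMap_of_spectrum_subset_singleton A c ?_ hA.isSelfAdjoint
    rw [hA.spectrum_real_eq_range_eigenvalues]
    rintro _ ⟨i, rfl⟩
    exact h i
  · rintro rfl i
    have : Nonempty n := ⟨i⟩
    simpa [spectrum.scalar_eq] using hA.eigenvalues_mem_spectrum_real i

theorem Matrix.ext_of_forall_trace_kronecker_mul {m n R : Type*} [Fintype m] [DecidableEq m]
    [Fintype n] [DecidableEq n] [Semiring R] {X Y : Matrix (n × m) (n × m) R}
    (h : ∀ a b, ((a ⊗ₖ b) * X).trace = ((a ⊗ₖ b) * Y).trace) : X = Y := by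
  ext ⟨i, j⟩ ⟨k, l⟩
  simpa [single_kronecker_single, trace_single_mul] using h (single k i 1) (single l j 1)

section NormalizedTrace

variable {n : ℕ} {L : Type*} [Ring L] [Algebra ℂ L] (τ : L →ₗ[ℂ] ℂ)

theorem tauM_mul_comm (hτtr : ∀ x y : L, τ (x * y) = τ (y * x)) (x y : Matrix (Fin n) (Fin n) L) :
    tauM n τ (x * y) = tauM n τ (y * x) := by
  simp only [tauM, mul_apply, map_sum, hτtr (x _ _)]
  rw [Finset.sum_comm]

theorem tauM_incl (hτ1 : τ 1 = 1) (a : Matrix (Fin n) (Fin n) ℂ) :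
    tauM n τ (incl n a) = (n : ℂ)⁻¹ * a.trace := by
  simp [tauM, incl, trace, Algebra.algebraMap_eq_smul_one, hτ1]

theorem tauM_one (hτ1 : τ 1 = 1) (hn : n ≠ 0) : tauM n τ 1 = 1 := by
  simpa [incl, hn] using tauM_incl τ hτ1 (1 : Matrix (Fin n) (Fin n) ℂ)

end NormalizedTrace

section DensityMatrix

variable {n : ℕ} {L : Type*} [Ring L] [StarRing L] [Algebra ℂ L] (τ : L →ₗ[ℂ] ℂ)

theorem trace_rhoU (u : Matrix (Fin n) (Fin n) L) : (rhoU n τ u).trace = tauM n τ (star u * u) := by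
  simp only [trace, diag, rhoU, of_apply, tauM, mul_apply, star_apply, map_sum, Finset.mul_sum,
    Fintype.sum_prod_type]
  exact Finset.sum_comm

theorem tauM_incl_mul_conj (hτtr : ∀ x y : L, τ (x * y) = τ (y * x))
    (u : Matrix (Fin n) (Fin n) L) (a b : Matrix (Fin n) (Fin n) ℂ) :
    tauM n τ (incl n a * (u * incl n b * star u)) = ((a ⊗ₖ bᵀ) * rhoU n τ u).trace := by
  simp only [tauM, trace, diag, incl, rhoU, mul_apply, map_apply, star_apply, of_apply,
    kroneckerMap_apply, transpose_apply, Fintype.sum_prod_type, Finset.mul_sum, Finset.sum_mul, map_sum]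
  refine Finset.sum_congr rfl fun s _ => ?_
  rw [Finset.sum_comm]
  refine Finset.sum_congr rfl fun q _ => Finset.sum_congr rfl fun t _ =>
    Finset.sum_congr rfl fun p _ => ?_
  simp only [Algebra.algebraMap_eq_smul_one, mul_smul_comm, smul_mul_assoc, mul_one, one_mul,
    map_smul, smul_eq_mul, hτtr (u _ _)]
  ring

theorem dotProduct_rhoU_mulVec [StarModule ℂ L] (u : Matrix (Fin n) (Fin n) L)
    (x : Fin n × Fin n → ℂ) :
    star x ⬝ᵥ (rhoU n τ u *ᵥ x) =
      (n : ℂ)⁻¹ * τ (star (∑ p, star (x p) • u p.1 p.2) * ∑ p, star (x p) • u p.1 p.2) := by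
  simp only [dotProduct, mulVec, rhoU, of_apply, Pi.star_apply, star_sum, star_smul, star_star,
    Finset.sum_mul, Finset.mul_sum, smul_mul_smul_comm, map_sum, map_smul, smul_eq_mul]
  exact Finset.sum_congr rfl fun _ _ => Finset.sum_congr rfl fun _ _ => by ring

theorem rhoU_posSemidef [StarModule ℂ L] (hτpos : ∀ x : L, 0 ≤ τ (star x * x))
    (u : Matrix (Fin n) (Fin n) L) (hherm : (rhoU n τ u).IsHermitian) :
    (rhoU n τ u).PosSemidef := by
  refine .of_dotProduct_mulVec_nonneg hherm fun x => ?_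
  rw [dotProduct_rhoU_mulVec]
  exact mul_nonneg (by simp) (hτpos _)

theorem mutuallyOrthogonalConj_iff_rhoU_eq_smul_one (hτ1 : τ 1 = 1)
    (hτtr : ∀ x y : L, τ (x * y) = τ (y * x)) (u : Matrix (Fin n) (Fin n) L)
    (hu : star u * u = 1) :
    MutuallyOrthogonalConj n τ u ↔ rhoU n τ u = ((n : ℂ) ^ 2)⁻¹ • 1 := by
  have hconj : ∀ b, tauM n τ (u * incl n b * star u) = tauM n τ (incl n b) := fun b => by
    rw [tauM_mul_comm τ hτtr, ← mul_assoc, hu, one_mul]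
  have hprod : ∀ a b, tauM n τ (incl n a) * tauM n τ (incl n b) =
      ((a ⊗ₖ bᵀ) * (((n : ℂ) ^ 2)⁻¹ • 1)).trace := fun a b => by
    rw [Matrix.mul_smul, mul_one, trace_smul, trace_kronecker, trace_transpose, tauM_incl τ hτ1,
      tauM_incl τ hτ1, smul_eq_mul]
    ring
  simp only [MutuallyOrthogonalConj, tauM_incl_mul_conj τ hτtr, hconj, hprod]
  refine ⟨fun h => ext_of_forall_trace_kronecker_mul fun a b => by simpa using h a bᵀ, ?_⟩
  rintro h a b
  rw [h]

end DensityMatrix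

theorem mutually_orthogonal_iff_entropy_eq_two_log_general
    {n : ℕ} {L : Type*} [Ring L] [StarRing L] [Algebra ℂ L] [StarModule ℂ L]
    (τ : L →ₗ[ℂ] ℂ)
    (hτ1 : τ 1 = 1)
    (hτtr : ∀ x y : L, τ (x * y) = τ (y * x))
    (hτpos : ∀ x : L, 0 ≤ τ (star x * x))
    (u : Matrix (Fin n) (Fin n) L)
    (hu : star u * u = 1)
    (hherm : (rhoU n τ u).IsHermitian) :
    MutuallyOrthogonalConj n τ u ↔
      vnEntropy (rhoU n τ u) hherm = 2 * Real.log n := by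
  rcases Nat.eq_zero_or_pos n with rfl | hn
  · simp [MutuallyOrthogonalConj, vnEntropy, tauM]
  have hsum : ∑ i, hherm.eigenvalues i = 1 := by
    have htrace := hherm.trace_eq_sum_eigenvalues
    rw [trace_rhoU, hu, tauM_one τ hτ1 hn.ne'] at htrace
    simpa using congrArg Complex.re htrace.symm
  have hcard : (Fintype.card (Fin n × Fin n) : ℝ) = (n : ℝ) ^ 2 := by simp [sq]
  have hlog : 2 * Real.log n = Real.log (Fintype.card (Fin n × Fin n)) := by
    rw [hcard, Real.log_pow, Nat.cast_ofNat]
  rw [mutuallyOrthogonalConj_iff_rhoU_eq_smul_one τ hτ1 hτtr u hu, vnEntropy, hlog,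
    Real.sum_negMulLog_eq_log_card_iff (rhoU_posSemidef τ hτpos u hherm).eigenvalues_nonneg hsum,
    hherm.eigenvalues_eq_const_iff, hcard]
  simp

/-- For a unitary `u ∈ M = M_n(L)`, the subalgebras `N = M_n(ℂ) ⊗ 1_L`
and `uNu*` are mutually orthogonal if and only if the von Neumann entropy of `ρ[U]`
equals `2 log n`, the logarithm of the dimension of `N`. -/
theorem mutually_orthogonal_iff_entropy_eq_two_log
    {n : ℕ} {L : Type*} [Ring L] [StarRing L] [Algebra ℂ L] [StarModule ℂ L]
    [FiniteDimensional ℂ L]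
    (τ : L →ₗ[ℂ] ℂ)
    (hτ1 : τ 1 = 1)
    (hτtr : ∀ x y : L, τ (x * y) = τ (y * x))
    (hτstar : ∀ x : L, τ (star x) = starRingEnd ℂ (τ x))
    (hτpos : ∀ x : L, 0 ≤ τ (star x * x))
    (hτfaithful : ∀ x : L, τ (star x * x) = 0 → x = 0)
    (u : Matrix (Fin n) (Fin n) L)
    (hu : star u * u = 1) (hu' : u * star u = 1)
    (hherm : (rhoU n τ u).IsHermitian) :
    MutuallyOrthogonalConj n τ u ↔
      vnEntropy (rhoU n τ u) hherm = 2 * Real.log n :=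
  mutually_orthogonal_iff_entropy_eq_two_log_general τ hτ1 hτtr hτpos u hu hherm
end

section
/- Identify M_{nm}(ℂ) with M_n(ℂ) ⊗ M_m(ℂ) and let A = M_n(ℂ) ⊗ 1. If there exists a unitary u ∈ M_{nm}(ℂ) such that A and uAu* are mutually orthogonal (with respect to the normalized trace τ = Tr/(nm)), then m ≥ n. -/
/-! With respect to the inner products `⟨x, y⟩ = τ(x* y)`, orthogonality of `A` and `uAu*` and
the trace property make `a ⊗ b ↦ a · u b u*` an isometry from `M_n ⊗ M_n` (with `τ_n ⊗ τ_n`)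
into `M_{nm}`: `τ((a u b u*)* (c u d u*)) = τ_n(a* c) τ_n(b* d)`. So the `n⁴` elements
`E_ij · u E_kl u*` are pairwise orthogonal and nonzero, hence linearly independent in a space of
dimension `n²m²`, which forces `n ≤ m`. -/

open Matrix

/-- The normalized trace `τ = Tr/(nm)` on `M_{nm}(ℂ) = M_n(ℂ) ⊗ M_m(ℂ)`, realized as
`n×n` matrices with `m×m` matrix entries: `τ(x) = (1/(nm)) Σ_i Tr(x_{ii})`. -/
noncomputable def tauNM (n m : ℕ)
    (x : Matrix (Fin n) (Fin n) (Matrix (Fin m) (Fin m) ℂ)) : ℂ :=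
  ((n * m : ℕ) : ℂ)⁻¹ * ∑ i, (x i i).trace

/-- The embedding `a ↦ a ⊗ 1` of `M_n(ℂ)` into `M_{nm}(ℂ) = M_n(ℂ) ⊗ M_m(ℂ)`,
whose image is the subalgebra `A = M_n(ℂ) ⊗ 1`. -/
noncomputable def inclA (n m : ℕ) (a : Matrix (Fin n) (Fin n) ℂ) :
    Matrix (Fin n) (Fin n) (Matrix (Fin m) (Fin m) ℂ) :=
  a.map (algebraMap ℂ (Matrix (Fin m) (Fin m) ℂ))

theorem conj_mul_conj {M : Type*} [Monoid M] {u v : M} (h : v * u = 1) (x y : M) :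
    u * x * v * (u * y * v) = u * (x * y) * v := by
  simp only [mul_assoc, ← mul_assoc v u, h, one_mul]

section

variable {n m : ℕ}

theorem tauNM_eq_trace_trace (x : Matrix (Fin n) (Fin n) (Matrix (Fin m) (Fin m) ℂ)) :
    tauNM n m x = ((n * m : ℕ) : ℂ)⁻¹ * x.trace.trace := by
  rw [tauNM, ← trace_sum]
  rfl

variable (n m) in
noncomputable def tauNMLinear : Matrix (Fin n) (Fin n) (Matrix (Fin m) (Fin m) ℂ) →ₗ[ℂ] ℂ :=
  ((n * m : ℕ) : ℂ)⁻¹ •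
    traceLinearMap (Fin m) ℂ ℂ ∘ₗ traceLinearMap (Fin n) ℂ (Matrix (Fin m) (Fin m) ℂ)

theorem tauNMLinear_apply (x : Matrix (Fin n) (Fin n) (Matrix (Fin m) (Fin m) ℂ)) :
    tauNMLinear n m x = tauNM n m x := by
  simp [tauNMLinear, tauNM_eq_trace_trace]

theorem tauNM_mul_comm (x y : Matrix (Fin n) (Fin n) (Matrix (Fin m) (Fin m) ℂ)) :
    tauNM n m (x * y) = tauNM n m (y * x) := by
  simp only [tauNM, mul_apply, trace_sum]
  rw [Finset.sum_comm]
  simp only [trace_mul_comm (x _ _)]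

theorem tauNM_conj {u : Matrix (Fin n) (Fin n) (Matrix (Fin m) (Fin m) ℂ)}
    (hu : star u * u = 1) (x : Matrix (Fin n) (Fin n) (Matrix (Fin m) (Fin m) ℂ)) :
    tauNM n m (u * x * star u) = tauNM n m x := by
  rw [tauNM_mul_comm, ← mul_assoc, hu, one_mul]

theorem inclA_mul (a b : Matrix (Fin n) (Fin n) ℂ) :
    inclA n m (a * b) = inclA n m a * inclA n m b :=
  Matrix.map_mul

theorem star_inclA (a : Matrix (Fin n) (Fin n) ℂ) : star (inclA n m a) = inclA n m (star a) := by
  ext1 i j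
  simp [inclA, star_eq_conjTranspose, Algebra.algebraMap_eq_smul_one]

theorem tauNM_inclA (hm : m ≠ 0) (a : Matrix (Fin n) (Fin n) ℂ) :
    tauNM n m (inclA n m a) = (n : ℂ)⁻¹ * a.trace := by
  have hm' : (m : ℂ) ≠ 0 := Nat.cast_ne_zero.mpr hm
  simp only [tauNM, inclA, map_apply, Algebra.algebraMap_eq_smul_one, trace_smul, trace_one,
    Fintype.card_fin, smul_eq_mul, ← Finset.sum_mul, Nat.cast_mul, mul_inv]
  field_simp
  rfl

variable (n m) in
noncomputable def tauNMForm :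
    Matrix (Fin n) (Fin n) (Matrix (Fin m) (Fin m) ℂ) →ₗ⋆[ℂ]
      Matrix (Fin n) (Fin n) (Matrix (Fin m) (Fin m) ℂ) →ₗ[ℂ] ℂ :=
  ((LinearMap.mul ℂ _).compr₂ (tauNMLinear n m)).comp (starLinearEquiv ℂ).toLinearMap

theorem tauNMForm_apply (x y : Matrix (Fin n) (Fin n) (Matrix (Fin m) (Fin m) ℂ)) :
    tauNMForm n m x y = tauNM n m (star x * y) := by
  simp [tauNMForm, tauNMLinear_apply]

theorem tauNM_star_mul_of_orthogonal (hm : m ≠ 0)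
    {u : Matrix (Fin n) (Fin n) (Matrix (Fin m) (Fin m) ℂ)} (hu : star u * u = 1)
    (horth : ∀ a b : Matrix (Fin n) (Fin n) ℂ,
      tauNM n m (inclA n m a * (u * inclA n m b * star u)) =
        tauNM n m (inclA n m a) * tauNM n m (u * inclA n m b * star u))
    (a b c d : Matrix (Fin n) (Fin n) ℂ) :
    tauNM n m (star (inclA n m a * (u * inclA n m b * star u)) *
        (inclA n m c * (u * inclA n m d * star u))) =
      (n : ℂ)⁻¹ * (star a * c).trace * ((n : ℂ)⁻¹ * (star b * d).trace) := by
  have hstar : star (inclA n m a * (u * inclA n m b * star u)) =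
      u * inclA n m (star b) * star u * inclA n m (star a) := by
    simp only [star_mul, star_star, star_inclA, mul_assoc]
  calc _ = tauNM n m (inclA n m (star a * c) *
          ((u * inclA n m d * star u) * (u * inclA n m (star b) * star u))) := by
        rw [hstar, mul_assoc, tauNM_mul_comm, ← mul_assoc (inclA n m (star a)), ← inclA_mul,
          mul_assoc]
    _ = _ := by
        rw [conj_mul_conj hu, ← inclA_mul, horth, tauNM_conj hu, tauNM_inclA hm,
          tauNM_inclA hm, trace_mul_comm d]

theorem trace_star_single_mul_single (i j k l : Fin n) :
    (star (single i j (1 : ℂ)) * single k l 1).trace = if k = i ∧ l = j then 1 else 0 := by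
  simp [star_eq_conjTranspose, conjTranspose_single, trace_single_mul, single_apply]

theorem linearIndependent_inclA_single_mul_conj (hm : m ≠ 0)
    {u : Matrix (Fin n) (Fin n) (Matrix (Fin m) (Fin m) ℂ)} (hu : star u * u = 1)
    (horth : ∀ a b : Matrix (Fin n) (Fin n) ℂ,
      tauNM n m (inclA n m a * (u * inclA n m b * star u)) =
        tauNM n m (inclA n m a) * tauNM n m (u * inclA n m b * star u)) :
    LinearIndependent ℂ fun s : (Fin n × Fin n) × (Fin n × Fin n) ↦
      inclA n m (single s.1.1 s.1.2 1) * (u * inclA n m (single s.2.1 s.2.2 1) * star u) := by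
  have hform : ∀ s t : (Fin n × Fin n) × (Fin n × Fin n),
      tauNMForm n m
          (inclA n m (single s.1.1 s.1.2 1) * (u * inclA n m (single s.2.1 s.2.2 1) * star u))
          (inclA n m (single t.1.1 t.1.2 1) * (u * inclA n m (single t.2.1 t.2.2 1) * star u)) =
        if s = t then ((n : ℂ) * n)⁻¹ else 0 := by
    rintro ⟨⟨i, j⟩, k, l⟩ ⟨⟨i', j'⟩, k', l'⟩
    rw [tauNMForm_apply, tauNM_star_mul_of_orthogonal hm hu horth, trace_star_single_mul_single,
      trace_star_single_mul_single]
    simp only [Prod.ext_iff, mul_inv]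
    split_ifs <;> grind
  refine LinearMap.linearIndependent_of_isOrthoᵢ (B := tauNMForm n m)
    (fun s t hst ↦ (hform s t).trans (if_neg hst)) fun s ↦ ?_
  have hn : (n : ℂ) ≠ 0 := Nat.cast_ne_zero.mpr (Fin.pos s.1.1).ne'
  simpa [hform] using hn

end

theorem le_of_exists_mutually_orthogonal_conjugate_general
    {n m : ℕ} (hm : 0 < m)
    (h : ∃ u : Matrix (Fin n) (Fin n) (Matrix (Fin m) (Fin m) ℂ),
      star u * u = 1 ∧ u * star u = 1 ∧
        ∀ a b : Matrix (Fin n) (Fin n) ℂ,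
          tauNM n m (inclA n m a * (u * inclA n m b * star u)) =
            tauNM n m (inclA n m a) * tauNM n m (u * inclA n m b * star u)) :
    n ≤ m := by
  obtain ⟨u, hu, -, horth⟩ := h
  have hcard := (linearIndependent_inclA_single_mul_conj hm.ne' hu horth).fintype_card_le_finrank
  simp only [Fintype.card_prod, Fintype.card_fin, Module.finrank_matrix, Module.finrank_self,
    mul_one] at hcard
  rcases n.eq_zero_or_pos with rfl | hn
  · exact Nat.zero_le m
  exact Nat.mul_self_le_mul_self_iff.mp (Nat.le_of_mul_le_mul_left hcard (Nat.mul_pos hn hn))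

/-- Identify `M_{nm}(ℂ)` with `M_n(ℂ) ⊗ M_m(ℂ)` and let
`A = M_n(ℂ) ⊗ 1`. If there exists a unitary `u ∈ M_{nm}(ℂ)` such that `A` and `uAu*`
are mutually orthogonal with respect to `τ = Tr/(nm)`, then `m ≥ n`. -/
theorem le_of_exists_mutually_orthogonal_conjugate
    {n m : ℕ} (hn : 0 < n) (hm : 0 < m)
    (h : ∃ u : Matrix (Fin n) (Fin n) (Matrix (Fin m) (Fin m) ℂ),
      star u * u = 1 ∧ u * star u = 1 ∧
        ∀ a b : Matrix (Fin n) (Fin n) ℂ,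
          tauNM n m (inclA n m a * (u * inclA n m b * star u)) =
            tauNM n m (inclA n m a) * tauNM n m (u * inclA n m b * star u)) :
    n ≤ m :=
  le_of_exists_mutually_orthogonal_conjugate_general hm h
end
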